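/- Suppose that both α and β are injective. Then the groups G_α and G_β are isomorphic if and only if there exists Q ∈ GL_m(ℤ) such that Q⁻¹·(im α)·Q = im β, i.e. if and only if the images of α and β are conjugate subgroups of GL_m(ℤ). -/

import Mathlib

/-!
An isomorphism `G_α ≃* G_β` maps the normal abelian subgroup `ℤ^m` of `G_α` onto a subgroup whose
image in `F_n` is normal and abelian. By Nielsen–Schreier such a subgroup of a free group of rank
`≥ 2` is trivial: it would be infinite cyclic, `⟨c⟩`, normalised by everything, so all squares would
lie in the centraliser of `c`, which is free with nontrivial centre, hence cyclic; but the squares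
of two distinct generators do not commute. So the isomorphism restricts to an automorphism
`a ↦ a Q` of `ℤ^m` and induces a surjection `f` of `F_n` with `B_{f u} = Q⁻¹ A_u Q`.
Conversely, if `α`, `β` are injective with conjugate images, then `f = β⁻¹ ∘ (Q⁻¹ · Q) ∘ α` is an
automorphism of `F_n` and `(tᵃ, u) ↦ (t^{aQ}, f u)` is an isomorphism `G_α ≃* G_β`.
-/

open Matrix SemidirectProduct

/-- The free abelian group `ℤ^m`, written multiplicatively. -/
abbrev FA (m : ℕ) : Type := Multiplicative (Fin m → ℤ)

/-- The (right) action of `GL_m(ℤ)` on `ℤ^m` (row vectors), as a homomorphism into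
`MulAut (ℤ^m)`: the automorphism attached to `M` sends `a` to `a · M⁻¹`, so that in the
semidirect product below one gets the relation `u⁻¹ tᵃ u = t^(a·A_u)`. -/
def rowAction (m : ℕ) :
    Matrix.GeneralLinearGroup (Fin m) ℤ →* MulAut (FA m) where
  toFun M :=
  { toFun := fun a => Multiplicative.ofAdd
      (Matrix.vecMul (Multiplicative.toAdd a)
        ((↑(M⁻¹) : Matrix (Fin m) (Fin m) ℤ)))
    invFun := fun a => Multiplicative.ofAdd
      (Matrix.vecMul (Multiplicative.toAdd a) ((↑M : Matrix (Fin m) (Fin m) ℤ)))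
    left_inv := by
      intro a
      simp [Matrix.vecMul_vecMul]
    right_inv := by
      intro a
      simp [Matrix.vecMul_vecMul]
    map_mul' := by
      intro a b
      simp [Matrix.add_vecMul] }
  map_one' := by
    ext a
    simp
  map_mul' := by
    intro M N
    ext a
    simp [Matrix.vecMul_vecMul, _root_.mul_inv_rev]

/-- The free-abelian by free group `G_α = F_n ⋉_α ℤ^m` associated to
`α : F_n → GL_m(ℤ)`; it satisfies `u⁻¹ tᵃ u = t^(a·A_u)`. -/
abbrev Gsd {n m : ℕ} (α : FreeGroup (Fin n) →* Matrix.GeneralLinearGroup (Fin m) ℤ) :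
    Type :=
  FA m ⋊[(rowAction m).comp α] FreeGroup (Fin n)

/-- `tA α a` is the element `tᵃ` of the abelian part of `G_α`. -/
def tA {n m : ℕ} (α : FreeGroup (Fin n) →* Matrix.GeneralLinearGroup (Fin m) ℤ)
    (a : Fin m → ℤ) : Gsd α :=
  SemidirectProduct.inl (Multiplicative.ofAdd a)

/-- `fE α u` is the element `u` of the free part of `G_α`. -/
def fE {n m : ℕ} (α : FreeGroup (Fin n) →* Matrix.GeneralLinearGroup (Fin m) ℤ)
    (u : FreeGroup (Fin n)) : Gsd α :=
  SemidirectProduct.inr u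

/-- The projection `τ : G_α → ℤ^m`, reading off the abelian part of the normal form
`g = u · tᵃ` (i.e. `τ (fE α u * tA α a) = a`). -/
def tau {n m : ℕ} (α : FreeGroup (Fin n) →* Matrix.GeneralLinearGroup (Fin m) ℤ)
    (g : Gsd α) : Fin m → ℤ :=
  Matrix.vecMul (Multiplicative.toAdd (SemidirectProduct.left g))
    ((↑(α (SemidirectProduct.right g)) : Matrix (Fin m) (Fin m) ℤ))

open Subgroup

namespace FreeGroup

variable {α : Type*}

theorem not_commute_sq_of_ne {a b : α} (hab : a ≠ b) :
    ¬Commute (of a ^ 2) (of b ^ 2) := by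
  classical
  intro h
  -- In `S₄` the square of a 4-cycle is a double transposition, which does not commute with the
  -- square of a 3-cycle.
  have := congrArg (lift (fun t => if t = a then finRotate 4
    else if t = b then Equiv.swap 0 1 * Equiv.swap 1 2 else 1 : α → Equiv.Perm (Fin 4))) h.eq
  simp only [_root_.map_mul, _root_.map_pow, lift_apply_of, hab, hab.symm, if_true, if_false]
    at this
  exact absurd this (by decide)

theorem eq_of_commute_of {a b : α} (h : Commute (of a) (of b)) : a = b :=
  not_not.mp fun hab => not_commute_sq_of_ne hab (h.pow_pow 2 2)

instance isCyclic_of_subsingleton [Subsingleton α] : IsCyclic (FreeGroup α) := by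
  rw [isCyclic_iff_exists_zpowers_eq_top]
  rcases isEmpty_or_nonempty α with hα | ⟨⟨a⟩⟩
  · exact ⟨1, Subsingleton.elim _ _⟩
  · refine ⟨of a, top_unique ?_⟩
    rw [← closure_range_of, zpowers_eq_closure]
    exact closure_mono (Set.range_subset_iff.mpr fun b => Subsingleton.elim b a ▸ rfl)

end FreeGroup

namespace IsFreeGroup

variable {G : Type*} [Group G] [IsFreeGroup G]

theorem isCyclic_of_isMulCommutative [IsMulCommutative G] : IsCyclic G := by
  let e := mulEquiv G
  have : Subsingleton (Generators G) :=
    ⟨fun a b => FreeGroup.eq_of_commute_of <|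
      Commute.of_map e.injective (mul_comm' (e (.of a)) (e (.of b)))⟩
  exact isCyclic_of_surjective e e.surjective

end IsFreeGroup

namespace FreeGroup

variable {α : Type*}

theorem mem_zpowers_of_commute_of {z : FreeGroup α} {a : α} (h : Commute z (of a)) :
    z ∈ zpowers (of a) := by
  classical
  -- `⟨z, of a⟩` is free abelian, hence cyclic, say `⟨c⟩`; counting the exponent of `a` shows
  -- that `of a = c ^ (±1)`.
  let H := closure {z, of a}
  have : IsMulCommutative H := isMulCommutative_closure <| by
    rintro x (rfl | rfl) y (rfl | rfl) <;> first | rfl | exact h | exact h.symm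
  obtain ⟨c, hc⟩ :=
    H.isCyclic_iff_exists_zpowers_eq_top.mp IsFreeGroup.isCyclic_of_isMulCommutative
  have hz : z ∈ zpowers c := hc ▸ subset_closure (by simp)
  obtain ⟨k, hk⟩ := mem_zpowers_iff.mp (hc ▸ subset_closure (by simp) : of a ∈ zpowers c)
  let ε : FreeGroup α →* Multiplicative ℤ := lift (Pi.mulSingle a (.ofAdd 1))
  have hkε : k * (ε c).toAdd = 1 := by
    simpa [ε] using congrArg (fun x => (ε x).toAdd) hk
  have hc' : c = of a ^ k := by
    have hkk : k * k = 1 := by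
      rcases Int.eq_one_or_neg_one_of_mul_eq_one hkε with rfl | rfl <;> rfl
    rw [← hk, ← _root_.zpow_mul, hkk, zpow_one]
  exact zpowers_le.mpr (zpow_mem (mem_zpowers _) k) (hc' ▸ hz)

theorem eq_one_of_commute_of_commute {z : FreeGroup α} {a b : α} (hab : a ≠ b)
    (ha : Commute z (of a)) (hb : Commute z (of b)) : z = 1 := by
  classical
  obtain ⟨r, rfl⟩ := mem_zpowers_iff.mp (mem_zpowers_of_commute_of ha)
  obtain ⟨s, hs⟩ := mem_zpowers_iff.mp (mem_zpowers_of_commute_of hb)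
  let ε : FreeGroup α →* Multiplicative ℤ := lift (Pi.mulSingle a (.ofAdd 1))
  have hr : 0 = r := by simpa [ε, hab.symm] using congrArg (fun x => (ε x).toAdd) hs
  rw [← hr, zpow_zero]

end FreeGroup

namespace IsFreeGroup

variable {G : Type*} [Group G] [IsFreeGroup G]

theorem isCyclic_of_mem_center {z : G} (hz : z ∈ center G) (hz1 : z ≠ 1) : IsCyclic G := by
  let e := mulEquiv G
  have hcomm (a : Generators G) : Commute (e.symm z) (.of a) := by
    simpa using (Commute.symm (mem_center_iff.mp hz (e (.of a)))).map e.symm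
  have : Subsingleton (Generators G) := ⟨fun a b => by_contra fun hab =>
    hz1 (e.symm.map_eq_one_iff.mp (FreeGroup.eq_one_of_commute_of_commute hab (hcomm a) (hcomm b)))⟩
  exact isCyclic_of_surjective e e.surjective

end IsFreeGroup

theorem sq_mem_centralizer_of_normal_zpowers {G : Type*} [Group G] [IsMulTorsionFree G] {c : G}
    (hc : c ≠ 1) [hN : (zpowers c).Normal] (g : G) : g ^ 2 ∈ centralizer {c} := by
  -- conjugation by `g` acts on `⟨c⟩` as `c ↦ c ^ k`, with `k = ±1` since `c` has infinite order
  obtain ⟨k, hk⟩ := mem_zpowers_iff.mp (hN.conj_mem c (mem_zpowers c) g)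
  obtain ⟨j, hj⟩ := mem_zpowers_iff.mp (hN.conj_mem c (mem_zpowers c) g⁻¹)
  have hkj : k * j = 1 := by
    refine injective_zpow_iff_not_isOfFinOrder.mpr (not_isOfFinOrder_of_isMulTorsionFree hc) ?_
    calc c ^ (k * j) = g * (g⁻¹ * c * g⁻¹⁻¹) * g⁻¹ := by rw [_root_.zpow_mul, hk, conj_zpow, hj]
      _ = c ^ (1 : ℤ) := by group
  have hkk : k * k = 1 := by
    rcases Int.eq_one_or_neg_one_of_mul_eq_one hkj with rfl | rfl <;> rfl
  rw [mem_centralizer_singleton_iff, ← mul_inv_eq_iff_eq_mul]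
  calc g ^ 2 * c * (g ^ 2)⁻¹ = g * (g * c * g⁻¹) * g⁻¹ := by rw [sq]; group
    _ = c ^ (k * k) := by rw [← hk, ← conj_zpow, ← hk, _root_.zpow_mul]
    _ = c := by rw [hkk, zpow_one]

namespace FreeGroup

variable {α : Type*}

theorem isCyclic_centralizer_singleton {z : FreeGroup α} (hz : z ≠ 1) :
    IsCyclic (centralizer {z}) :=
  IsFreeGroup.isCyclic_of_mem_center (z := ⟨z, mem_centralizer_singleton_iff.mpr rfl⟩)
    (mem_center_iff.mpr fun g => Subtype.ext (mem_centralizer_singleton_iff.mp g.2))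
    (by simpa using hz)

theorem eq_bot_of_normal_of_isMulCommutative [Nontrivial α] (P : Subgroup (FreeGroup α))
    [P.Normal] [IsMulCommutative P] : P = ⊥ := by
  obtain ⟨c, rfl⟩ :=
    P.isCyclic_iff_exists_zpowers_eq_top.mp IsFreeGroup.isCyclic_of_isMulCommutative
  by_contra hP
  have hc : c ≠ 1 := zpowers_ne_bot.mp hP
  have := isCyclic_centralizer_singleton hc
  have hsq (x : α) : of x ^ 2 ∈ centralizer {c} := sq_mem_centralizer_of_normal_zpowers hc _
  obtain ⟨a, b, hab⟩ := exists_pair_ne α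
  exact not_commute_sq_of_ne hab <|
    congrArg Subtype.val (mul_comm' (⟨_, hsq a⟩ : centralizer {c}) ⟨_, hsq b⟩)

end FreeGroup

namespace SemidirectProduct

variable {N₁ N₂ G₁ G₂ : Type*} [Group N₁] [Group N₂] [Group G₁] [Group G₂]
  {φ₁ : G₁ →* MulAut N₁} {φ₂ : G₂ →* MulAut N₂}

theorem inl_left_of_right_eq_one {w : N₁ ⋊[φ₁] G₁} (h : w.right = 1) : inl w.left = w := by
  simpa [h] using inl_left_mul_inr_right w

theorem mul_inl_mul_inv [IsMulCommutative N₁] (w : N₁ ⋊[φ₁] G₁) (x : N₁) :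
    w * inl x * w⁻¹ = inl (φ₁ w.right x) := by
  ext <;> simp [mul_comm' (w.left : N₁)]

theorem right_map_inl_eq_one [IsMulCommutative N₁]
    (hG₂ : ∀ P : Subgroup G₂, P.Normal → IsMulCommutative P → P = ⊥)
    {F : Type*} [FunLike F (N₁ ⋊[φ₁] G₁) (N₂ ⋊[φ₂] G₂)] [MonoidHomClass F _ _]
    (Φ : F) (hΦ : Function.Surjective Φ) (x : N₁) :
    (Φ (inl x)).right = 1 := by
  let P := (inl : N₁ →* N₁ ⋊[φ₁] G₁).range.map (rightHom.comp (Φ : _ →* N₂ ⋊[φ₂] G₂))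
  have hN : P.Normal := by
    refine Subgroup.Normal.map ?_ _ (rightHom_surjective.comp hΦ)
    rw [range_inl_eq_ker_rightHom]
    infer_instance
  have hx : (Φ (inl x)).right ∈ P := Subgroup.mem_map_of_mem _ (MonoidHom.mem_range.mpr ⟨x, rfl⟩)
  rwa [hG₂ P hN inferInstance, Subgroup.mem_bot] at hx

def leftMulEquiv (Φ : N₁ ⋊[φ₁] G₁ ≃* N₂ ⋊[φ₂] G₂) (h : ∀ x, (Φ (inl x)).right = 1)
    (h' : ∀ y, (Φ.symm (inl y)).right = 1) : N₁ ≃* N₂ where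
  toFun x := (Φ (inl x)).left
  invFun y := (Φ.symm (inl y)).left
  left_inv x := by
    simp only [inl_left_of_right_eq_one (h x), Φ.symm_apply_apply, left_inl]
  right_inv y := by
    simp only [inl_left_of_right_eq_one (h' y), Φ.apply_symm_apply, left_inl]
  map_mul' x y := by simp [mul_left, h]

theorem map_inl_eq_inl_leftMulEquiv (Φ : N₁ ⋊[φ₁] G₁ ≃* N₂ ⋊[φ₂] G₂)
    (h : ∀ x, (Φ (inl x)).right = 1) (h' : ∀ y, (Φ.symm (inl y)).right = 1) (x : N₁) :
    Φ (inl x) = inl (leftMulEquiv Φ h h' x) :=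
  (inl_left_of_right_eq_one (h x)).symm

theorem exists_conj_of_mulEquiv [IsMulCommutative N₁] [IsMulCommutative N₂]
    (hG₁ : ∀ P : Subgroup G₁, P.Normal → IsMulCommutative P → P = ⊥)
    (hG₂ : ∀ P : Subgroup G₂, P.Normal → IsMulCommutative P → P = ⊥)
    (Φ : N₁ ⋊[φ₁] G₁ ≃* N₂ ⋊[φ₂] G₂) :
    ∃ (σ : N₁ ≃* N₂) (f : G₁ →* G₂), Function.Surjective f ∧
      ∀ g, (φ₁ g).trans σ = σ.trans (φ₂ (f g)) := by
  have h := right_map_inl_eq_one hG₂ Φ Φ.surjective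
  have h' := right_map_inl_eq_one hG₁ Φ.symm Φ.symm.surjective
  let f := rightHom.comp (Φ.toMonoidHom.comp inr)
  have hf : rightHom.comp Φ.toMonoidHom = f.comp rightHom := by
    apply hom_ext
    · ext x
      simp [h]
    · rfl
  refine ⟨leftMulEquiv Φ h h', f, ?_, fun g => ?_⟩
  · refine Function.Surjective.of_comp (g := (rightHom : N₁ ⋊[φ₁] G₁ →* G₁)) ?_
    rw [← MonoidHom.coe_comp, ← hf, MonoidHom.coe_comp]
    exact rightHom_surjective.comp Φ.surjective
  · ext x
    apply inl_injective (φ := φ₂)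
    calc inl (leftMulEquiv Φ h h' (φ₁ g x))
        = Φ (inr g) * Φ (inl x) * (Φ (inr g))⁻¹ := by
          rw [← map_inl_eq_inl_leftMulEquiv, inl_aut]
          simp only [map_mul, map_inv]
      _ = inl (φ₂ (f g) (leftMulEquiv Φ h h' x)) := by
          rw [map_inl_eq_inl_leftMulEquiv Φ h h', mul_inl_mul_inv]; rfl

end SemidirectProduct

theorem rowAction_injective (m : ℕ) : Function.Injective (rowAction m) := by
  refine (injective_iff_map_eq_one _).mpr fun M hM => inv_eq_one.mp (Units.ext ?_)
  refine ext_iff_vecMul.mpr fun v => ?_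
  simpa [rowAction] using congrArg Multiplicative.toAdd (DFunLike.congr_fun hM (.ofAdd v))

theorem rowAction_surjective (m : ℕ) : Function.Surjective (rowAction m) := by
  let L (τ : MulAut (FA m)) : (Fin m → ℤ) →ₗ[ℤ] (Fin m → ℤ) := AddMonoidHom.toIntLinearMap
    { toFun a := (τ (.ofAdd a)).toAdd, map_zero' := map_one τ, map_add' := map_mul τ }
  have hL (τ τ' : MulAut (FA m)) : L (τ * τ') = L τ ∘ₗ L τ' := rfl
  let M (τ : MulAut (FA m)) := LinearMap.toMatrixRight' (L τ)
  have hM (τ τ' : MulAut (FA m)) : M τ * M τ' = M (τ' * τ) := by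
    simp only [M, hL, LinearMap.toMatrixRight'_comp]
  have hM1 : M 1 = 1 := LinearMap.toMatrixRight'_id
  intro σ
  -- `rowAction m P` multiplies by `P⁻¹`
  refine ⟨⟨M σ⁻¹, M σ, by rw [hM, mul_inv_cancel, hM1],
    by rw [hM, inv_mul_cancel, hM1]⟩, ?_⟩
  refine MulEquiv.ext fun a => congrArg Multiplicative.ofAdd ?_
  change a.toAdd ᵥ* M σ = (σ a).toAdd
  rw [← Matrix.toLinearMapRight'_apply, LinearEquiv.symm_apply_apply]
  rfl

theorem MulAut.trans_map_eq_map_trans_iff {H N : Type*} [Group H] [Group N] {ρ : H →* MulAut N}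
    (hρ : Function.Injective ρ) (a b p : H) :
    (ρ a).trans (ρ p) = (ρ p).trans (ρ b) ↔ b = p * a * p⁻¹ := by
  rw [← MulAut.mul_def, ← MulAut.mul_def, ← map_mul, ← map_mul, hρ.eq_iff, eq_mul_inv_iff_mul_eq,
    eq_comm]

section ConjugateRanges

variable {G G' H : Type*} [Group G] [Group G'] [Group H] {α : G →* H} {β : G' →* H} {Q : H}

theorem mem_range_iff_conj_mem_range {f : G →* G'} (hf : Function.Surjective f)
    (h : ∀ g, β (f g) = Q⁻¹ * α g * Q) (M : H) : M ∈ α.range ↔ Q⁻¹ * M * Q ∈ β.range := by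
  constructor
  · rintro ⟨g, rfl⟩
    exact ⟨f g, h g⟩
  · rintro ⟨g', hg'⟩
    obtain ⟨g, rfl⟩ := hf g'
    exact ⟨g, by simpa [h] using hg'⟩

theorem exists_mulEquiv_of_mem_range_iff (hα : Function.Injective α) (hβ : Function.Injective β)
    (h : ∀ M, M ∈ α.range ↔ Q⁻¹ * M * Q ∈ β.range) :
    ∃ f : G ≃* G', ∀ g, β (f g) = Q⁻¹ * α g * Q := by
  have hrange : α.range.map (MulAut.conj Q⁻¹).toMonoidHom = β.range := by
    ext M
    rw [Subgroup.mem_map_equiv, h]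
    simp [mul_assoc]
  refine ⟨(MonoidHom.ofInjective hα).trans <| ((MulAut.conj Q⁻¹).subgroupMap α.range).trans <|
    (MulEquiv.subgroupCongr hrange).trans (MonoidHom.ofInjective hβ).symm, fun g => ?_⟩
  refine (MonoidHom.apply_ofInjective_symm hβ _).trans ?_
  change Q⁻¹ * α g * Q⁻¹⁻¹ = _
  rw [inv_inv]

end ConjugateRanges

theorem iso_iff_conj_images_general {n m : ℕ} (hn : 2 ≤ n)
    (α β : FreeGroup (Fin n) →* Matrix.GeneralLinearGroup (Fin m) ℤ)
    (hα : Function.Injective α) (hβ : Function.Injective β) :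
    Nonempty (Gsd α ≃* Gsd β) ↔
      ∃ Q : Matrix.GeneralLinearGroup (Fin m) ℤ,
        ∀ M : Matrix.GeneralLinearGroup (Fin m) ℤ,
          M ∈ α.range ↔ Q⁻¹ * M * Q ∈ β.range := by
  have : Nontrivial (Fin n) := Fin.nontrivial_iff_two_le.mpr hn
  have hF (P : Subgroup (FreeGroup (Fin n))) (_ : P.Normal) (_ : IsMulCommutative P) : P = ⊥ :=
    FreeGroup.eq_bot_of_normal_of_isMulCommutative P
  have hρ := MulAut.trans_map_eq_map_trans_iff (rowAction_injective m)
  constructor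
  · rintro ⟨Φ⟩
    obtain ⟨σ, f, hf, hσ⟩ := SemidirectProduct.exists_conj_of_mulEquiv hF hF Φ
    obtain ⟨P, rfl⟩ := rowAction_surjective m σ
    refine ⟨P⁻¹, mem_range_iff_conj_mem_range hf fun g => ?_⟩
    simpa using (hρ _ _ _).mp (hσ g)
  · rintro ⟨Q, hQ⟩
    obtain ⟨f, hf⟩ := exists_mulEquiv_of_mem_range_iff hα hβ hQ
    exact ⟨SemidirectProduct.congr (rowAction m Q⁻¹) f fun g => (hρ _ _ _).mpr (by simp [hf])⟩

/-- For faithful actions, `G_α ≅ G_β` iff the images of `α` and `β` are conjugate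
subgroups of `GL_m(ℤ)`. -/
theorem iso_iff_conj_images {n m : ℕ} (hn : 2 ≤ n) (hm : 1 ≤ m)
    (α β : FreeGroup (Fin n) →* Matrix.GeneralLinearGroup (Fin m) ℤ)
    (hα : Function.Injective α) (hβ : Function.Injective β) :
    Nonempty (Gsd α ≃* Gsd β) ↔
      ∃ Q : Matrix.GeneralLinearGroup (Fin m) ℤ,
        ∀ M : Matrix.GeneralLinearGroup (Fin m) ℤ,
          M ∈ α.range ↔ Q⁻¹ * M * Q ∈ β.range :=
  iso_iff_conj_images_general hn α β hα hβ
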